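/- arXiv:1302.1065 — 4 statements merged into one kernel-verified Lean document; each statement's English description precedes it below -/
import Mathlib

section
/- Let f: ℝ → ℝ be defined by f(x) = x + α·x²·sin(1/x²) for x ≠ 0 and f(0) = 0, where α ≠ 0. Then for every δ > 0, f is not injective on the interval (-δ, δ). -/
open Set Filter Topology

lemma mono_deriv_nonneg {f : ℝ → ℝ} {a b x d : ℝ} (hm : MonotoneOn f (Set.Icc a b))
    (hx : x ∈ Set.Ioo a b) (hd : HasDerivAt f d x) : 0 ≤ d := by
  have h := hasDerivAt_iff_tendsto_slope.mp hd
  refine ge_of_tendsto h ?_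
  have hmem : Set.Ioo a b ∈ 𝓝[≠] x := nhdsWithin_le_nhds (Ioo_mem_nhds hx.1 hx.2)
  filter_upwards [hmem, self_mem_nhdsWithin] with y hy hne
  have hxI : x ∈ Set.Icc a b := ⟨hx.1.le, hx.2.le⟩
  have hyI : y ∈ Set.Icc a b := ⟨hy.1.le, hy.2.le⟩
  rw [slope_def_field]
  rcases lt_or_gt_of_ne (hne : y ≠ x) with h1 | h1
  · exact div_nonneg_of_nonpos (by simpa using hm hyI hxI h1.le)
      (by linarith)
  · exact div_nonneg (by simpa using hm hxI hyI h1.le) (by linarith)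

lemma anti_deriv_nonpos {f : ℝ → ℝ} {a b x d : ℝ} (hm : AntitoneOn f (Set.Icc a b))
    (hx : x ∈ Set.Ioo a b) (hd : HasDerivAt f d x) : d ≤ 0 := by
  have hm' : MonotoneOn (fun y => -f y) (Set.Icc a b) := fun u hu v hv huv =>
    neg_le_neg (hm hu hv huv)
  have := mono_deriv_nonneg hm' hx hd.neg
  linarith

theorem stmt_1 (α : ℝ) (hα : α ≠ 0) (f : ℝ → ℝ)
    (hf : ∀ x : ℝ, x ≠ 0 → f x = x + α * x ^ 2 * Real.sin (1 / x ^ 2))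
    (hf0 : f 0 = 0) :
    ∀ δ : ℝ, 0 < δ → ¬ Set.InjOn f (Set.Ioo (-δ) δ) := by
  intro δ hδ hinj
  have hπ := Real.pi_gt_three
  -- rewrite f
  have hfg : f = fun y => y + α * (y ^ 2 * Real.sin ((y ^ 2)⁻¹)) := by
    funext y
    by_cases hy : y = 0
    · simp [hy, hf0]
    · rw [hf y hy, one_div]; ring
  -- general derivative formula
  have key : ∀ y : ℝ, y ≠ 0 → HasDerivAt f
      (1 + α * (2 * y * Real.sin ((y ^ 2)⁻¹) +
        y ^ 2 * (Real.cos ((y ^ 2)⁻¹) * (-(2 * y) / (y ^ 2) ^ 2)))) y := by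
    intro y hy
    have h1 : HasDerivAt (fun z : ℝ => z ^ 2) (2 * y) y := by
      simpa using hasDerivAt_pow 2 y
    have h2 : HasDerivAt (fun z : ℝ => (z ^ 2)⁻¹) (-(2 * y) / (y ^ 2) ^ 2) y :=
      h1.inv (pow_ne_zero 2 hy)
    have h3 : HasDerivAt (fun z : ℝ => Real.sin ((z ^ 2)⁻¹))
        (Real.cos ((y ^ 2)⁻¹) * (-(2 * y) / (y ^ 2) ^ 2)) y :=
      (Real.hasDerivAt_sin _).comp y h2
    have h4 := ((hasDerivAt_id y).add ((h1.mul h3).const_mul α))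
    rw [hfg]
    exact h4
  -- choose n
  obtain ⟨n, hn⟩ := exists_nat_ge (4 / δ ^ 2 + 1 / α ^ 2)
  set c : ℝ := 2 * Real.pi * (n + 1) with hc_def
  have hα2 : 0 < 1 / α ^ 2 := by positivity
  have hδ2 : 0 < 4 / δ ^ 2 := by positivity
  have hnn : (0:ℝ) ≤ n := Nat.cast_nonneg n
  have hc : 4 / δ ^ 2 + 1 / α ^ 2 < c := by
    have : (n:ℝ) + 1 ≤ c := by nlinarith
    linarith
  have hcpos : 0 < c := by linarith
  set x₀ : ℝ := (Real.sqrt c)⁻¹ with hx₀_def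
  have hsqrtpos : 0 < Real.sqrt c := Real.sqrt_pos.mpr hcpos
  have hx0pos : 0 < x₀ := by positivity
  have hx0sq : x₀ ^ 2 = c⁻¹ := by
    rw [hx₀_def, inv_pow, Real.sq_sqrt hcpos.le]
  have hinvsq : (x₀ ^ 2)⁻¹ = c := by rw [hx0sq, inv_inv]
  have hx0δ : x₀ < δ / 2 := by
    have h1 : x₀ ^ 2 < δ ^ 2 / 4 := by
      rw [hx0sq]
      have h2 : (4 / δ ^ 2)⁻¹ = δ ^ 2 / 4 := by field_simp
      rw [← h2]
      exact inv_strictAnti₀ hδ2 (by linarith)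
    nlinarith
  have hx0α : x₀ < |α| := by
    have h1 : x₀ ^ 2 < α ^ 2 := by
      rw [hx0sq]
      have h2 : (1 / α ^ 2)⁻¹ = α ^ 2 := by field_simp
      rw [← h2]
      exact inv_strictAnti₀ hα2 (by linarith)
    have := abs_nonneg α
    nlinarith [sq_abs α]
  -- trig values at c
  have hsinc : Real.sin c = 0 := by
    have : c = (2 * (n + 1) : ℕ) * Real.pi := by push_cast; ring
    rw [this, Real.sin_nat_mul_pi]
  have hcosc : Real.cos c = 1 := by
    have : c = ((n + 1 : ℕ)) * (2 * Real.pi) := by push_cast; ring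
    rw [this, Real.cos_nat_mul_two_pi]
  -- derivatives at ±x₀
  have hdp : HasDerivAt f (1 - 2 * α / x₀) x₀ := by
    have h := key x₀ hx0pos.ne'
    convert h using 1
    rw [hinvsq, hsinc, hcosc]
    field_simp
    ring
  have hdm : HasDerivAt f (1 + 2 * α / x₀) (-x₀) := by
    have h := key (-x₀) (neg_ne_zero.mpr hx0pos.ne')
    convert h using 1
    simp only [neg_sq]
    rw [hinvsq, hsinc, hcosc]
    field_simp
    ring
  -- the two derivative values have opposite signs
  have habs : 2 ≤ |2 * α / x₀| := by
    rw [abs_div, abs_mul]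
    rw [abs_of_pos hx0pos, abs_two]
    rw [le_div_iff₀ hx0pos]
    nlinarith
  -- memberships
  have hmemp : x₀ ∈ Set.Ioo (-(δ / 2)) (δ / 2) := ⟨by linarith, hx0δ⟩
  have hmemm : -x₀ ∈ Set.Ioo (-(δ / 2)) (δ / 2) := ⟨by linarith, by linarith⟩
  clear_value x₀ c
  -- continuity of f
  have hcont : Continuous f := by
    rw [continuous_iff_continuousAt]
    intro y
    by_cases hy : y = 0
    · subst hy
      rw [hfg]
      have hA : Tendsto (fun z : ℝ => α * (z ^ 2 * Real.sin ((z ^ 2)⁻¹))) (𝓝 0) (𝓝 0) := by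
        have hb : ∀ z : ℝ, ‖α * (z ^ 2 * Real.sin ((z ^ 2)⁻¹))‖ ≤ |α| * z ^ 2 := by
          intro z
          rw [Real.norm_eq_abs, abs_mul, abs_mul]
          have h1 : |Real.sin ((z ^ 2)⁻¹)| ≤ 1 :=
            abs_le.mpr ⟨Real.neg_one_le_sin _, Real.sin_le_one _⟩
          have h2 : |z ^ 2| = z ^ 2 := abs_of_nonneg (by positivity)
          rw [h2]
          exact mul_le_mul_of_nonneg_left (mul_le_of_le_one_right (sq_nonneg z) h1)
            (abs_nonneg α)
        have hg : Tendsto (fun z : ℝ => |α| * z ^ 2) (𝓝 0) (𝓝 0) := by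
          have : Tendsto (fun z : ℝ => |α| * z ^ 2) (𝓝 0) (𝓝 (|α| * 0 ^ 2)) :=
            (continuous_const.mul (continuous_pow 2)).tendsto 0
          simpa using this
        exact squeeze_zero_norm hb hg
      have : Tendsto (fun z : ℝ => z + α * (z ^ 2 * Real.sin ((z ^ 2)⁻¹))) (𝓝 0) (𝓝 (0 + 0)) :=
        tendsto_id.add hA
      simpa [ContinuousAt] using this
    · exact (key y hy).continuousAt
  -- injectivity on Icc
  have hsub : Set.Icc (-(δ / 2)) (δ / 2) ⊆ Set.Ioo (-δ) δ := by
    intro z hz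
    exact ⟨by linarith [hz.1], by linarith [hz.2]⟩
  have hinj2 := hinj.mono hsub
  rcases ContinuousOn.strictMonoOn_of_injOn_Icc' (by linarith : -(δ / 2) ≤ δ / 2)
      hcont.continuousOn hinj2 with hm | ha
  · have hp := mono_deriv_nonneg hm.monotoneOn hmemp hdp
    have hq := mono_deriv_nonneg hm.monotoneOn hmemm hdm
    rcases le_or_gt 0 (2 * α / x₀) with hs | hs
    · rw [abs_of_nonneg hs] at habs; linarith
    · rw [abs_of_neg hs] at habs; linarith
  · have hp := anti_deriv_nonpos ha.antitoneOn hmemp hdp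
    have hq := anti_deriv_nonpos ha.antitoneOn hmemm hdm
    rcases le_or_gt 0 (2 * α / x₀) with hs | hs
    · rw [abs_of_nonneg hs] at habs; linarith
    · rw [abs_of_neg hs] at habs; linarith
end

section
/- Define f: ℝ → ℝ by f(0) = 0, f(x) = 1/(n+1) + (x - 1/(n+1))/2 for 1/(n+1) ≤ x < 1/n (n ∈ ℕ, n ≥ 1), and f(x) = -f(-x) for -1 < x < 0. Then f is differentiable at 0 with f'(0) = 1. -/
open Set Filter Topology Asymptotics

/-!
Every `x ∈ (0, 1)` lies in a unique interval `[1/(n+1), 1/n)`, on which `f` is the chord of slope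
`1/2` starting on the diagonal, so `|f x - x| = (x - 1/(n+1))/2 ≤ (1/n - 1/(n+1))/2 ≤ 1/(n+1)^2 ≤ x^2`.
Oddness extends this quadratic bound to `(-1, 1)`, and a quadratic contact with the diagonal forces
`f' 0 = 1`.
-/

lemma hasDerivAt_of_abs_sub_le_mul_sq {f : ℝ → ℝ} {a c K : ℝ}
    (h : ∀ᶠ x in 𝓝 a, |f x - f a - c * (x - a)| ≤ K * (x - a) ^ 2) : HasDerivAt f c a := by
  rw [hasDerivAt_iff_isLittleO]
  have hbigO : (fun x => f x - f a - (x - a) • c) =O[𝓝 a] fun x => ‖x - a‖ ^ 2 :=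
    IsBigO.of_bound K <| h.mono fun x hx => by
      simpa [smul_eq_mul, mul_comm] using hx
  exact hbigO.trans_isLittleO (isLittleO_pow_sub_sub a one_lt_two)

lemma exists_one_div_succ_le_lt_one_div {x : ℝ} (hx0 : 0 < x) (hx1 : x < 1) :
    ∃ n : ℕ, 1 ≤ n ∧ 1 / ((n : ℝ) + 1) ≤ x ∧ x < 1 / n := by
  have hinv : 1 < 1 / x := by rwa [lt_one_div one_pos hx0, div_one]
  obtain ⟨n, hn⟩ : ∃ n : ℕ, ⌈1 / x⌉₊ = n + 1 :=
    Nat.exists_eq_add_one.mpr (Nat.ceil_pos.mpr (one_pos.trans hinv))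
  have hle : 1 / x ≤ (n : ℝ) + 1 := by exact_mod_cast hn ▸ Nat.le_ceil (1 / x)
  have hlt : (n : ℝ) < 1 / x := by
    have := Nat.ceil_lt_add_one (one_div_pos.mpr hx0).le
    rw [hn, Nat.cast_succ] at this
    linarith
  have hn1 : 1 ≤ n := by
    by_contra! h
    simp only [Nat.lt_one_iff.mp h, Nat.cast_zero, zero_add] at hle
    linarith
  have hnpos : (0 : ℝ) < n := by exact_mod_cast hn1
  exact ⟨n, hn1, (one_div_le (by positivity) hx0).mpr hle, (lt_one_div hx0 hnpos).mpr hlt⟩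

lemma sub_one_div_succ_div_two_le_sq {n : ℕ} (hn : 1 ≤ n) {x : ℝ}
    (h1 : 1 / ((n : ℝ) + 1) ≤ x) (h2 : x < 1 / n) : (x - 1 / ((n : ℝ) + 1)) / 2 ≤ x ^ 2 := by
  have hn' : (1 : ℝ) ≤ n := by exact_mod_cast hn
  have hnpos : (0 : ℝ) < n := by linarith
  calc (x - 1 / ((n : ℝ) + 1)) / 2 ≤ (1 / n - 1 / ((n : ℝ) + 1)) / 2 := by linarith
    _ = 1 / (2 * n * (n + 1)) := by field_simp; ring
    _ ≤ (1 / ((n : ℝ) + 1)) ^ 2 := by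
      rw [div_pow, one_pow, one_div_le_one_div (by positivity) (by positivity)]
      nlinarith
    _ ≤ x ^ 2 := pow_le_pow_left₀ (by positivity) h1 2

lemma abs_sub_le_sq_of_odd {f : ℝ → ℝ} {r : ℝ} (hf0 : f 0 = 0)
    (hodd : ∀ x ∈ Ioo (-r) r, f (-x) = -f x) (hpos : ∀ x ∈ Ioo 0 r, |f x - x| ≤ x ^ 2) :
    ∀ x ∈ Ioo (-r) r, |f x - x| ≤ x ^ 2 := by
  rintro x ⟨hxl, hxr⟩
  rcases lt_trichotomy x 0 with hneg | rfl | hpos'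
  · calc |f x - x| = |f (-x) - -x| := by rw [← abs_neg, hodd x ⟨hxl, hxr⟩]; ring_nf
      _ ≤ (-x) ^ 2 := hpos (-x) ⟨by linarith, by linarith⟩
      _ = x ^ 2 := neg_sq x
  · simp [hf0]
  · exact hpos x ⟨hpos', hxr⟩

theorem stmt_4 (f : ℝ → ℝ) (hf0 : f 0 = 0)
    (hf : ∀ n : ℕ, 1 ≤ n → ∀ x : ℝ, 1 / (n + 1) ≤ x → x < 1 / n →
      f x = 1 / (n + 1) + (x - 1 / (n + 1)) / 2)
    (hodd : ∀ x ∈ Set.Ioo (-1 : ℝ) 1, f (-x) = - f x) :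
    HasDerivAt f 1 0 := by
  have hpos : ∀ x ∈ Ioo (0 : ℝ) 1, |f x - x| ≤ x ^ 2 := by
    rintro x ⟨hx0, hx1⟩
    obtain ⟨n, hn, h1, h2⟩ := exists_one_div_succ_le_lt_one_div hx0 hx1
    rw [hf n hn x h1 h2, abs_of_nonpos (by linarith)]
    linarith [sub_one_div_succ_div_two_le_sq hn h1 h2]
  have hbound := abs_sub_le_sq_of_odd hf0 hodd hpos
  refine hasDerivAt_of_abs_sub_le_mul_sq (K := 1) ?_
  filter_upwards [Ioo_mem_nhds (neg_lt_zero.mpr one_pos) one_pos] with x hx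
  simpa [hf0] using hbound x hx
end

section
/- Let f(x) = x³ + sgn(x)·x²·sin²(1/x) (with f(0)=0). For every δ > 0, f is neither convex nor concave on (0, δ). -/
open Real

private lemma cube_lt_sq_aux (B : ℝ) (hB : 1 ≤ B) :
    (1/(B*Real.pi))^3 < (2/((2*B+1)*Real.pi))^2 := by
  have hπ := Real.pi_pos
  have hπ3 := Real.pi_gt_three
  have hB0 : 0 < B := by linarith
  rw [div_pow, div_pow, div_lt_div_iff₀ (by positivity) (by positivity)]
  have h1 : (2*B+1)^2 ≤ 9*B^2 := by nlinarith
  have h2 : 9*B^2 ≤ 9*B^3 := by nlinarith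
  have h3 : ((2*B+1)*Real.pi)^2 = (2*B+1)^2 * Real.pi^2 := by ring
  have h4 : 12*B^3*Real.pi^2 ≤ 4*B^3*Real.pi^3 := by
    nlinarith [mul_nonneg (mul_nonneg (pow_pos hB0 3).le (sq_nonneg Real.pi))
      (by linarith : (0:ℝ) ≤ Real.pi - 3)]
  have h5 : 0 < Real.pi^2 := by positivity
  nlinarith [mul_le_mul_of_nonneg_right h1 (le_of_lt h5),
    mul_le_mul_of_nonneg_right h2 (le_of_lt h5)]

private lemma order_aux (B : ℝ) (hB : 1 ≤ B) :
    1/((B+1)*Real.pi) ≤ 2/((2*B+1)*Real.pi) ∧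
    2/((2*B+1)*Real.pi) ≤ 1/(B*Real.pi) := by
  have hπ := Real.pi_pos
  have hB0 : 0 < B := by linarith
  constructor
  · rw [div_le_div_iff₀ (by positivity) (by positivity)]; nlinarith
  · rw [div_le_div_iff₀ (by positivity) (by positivity)]; nlinarith

private lemma min_aux {p r : ℝ} (hp : 0 < p) (hpr : p ≤ r) :
    p^2 ≤ min (p^3+p^2) (r^3+r^2) := by
  apply le_min
  · nlinarith
  · nlinarith

theorem stmt_13 (f : ℝ → ℝ)
    (hf : ∀ x : ℝ, 0 < x → f x = x ^ 3 + x ^ 2 * (Real.sin (1 / x)) ^ 2) :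
    ∀ δ : ℝ, 0 < δ →
      ¬ ConvexOn ℝ (Set.Ioo 0 δ) f ∧ ¬ ConcaveOn ℝ (Set.Ioo 0 δ) f := by
  intro δ hδ
  have hπ := Real.pi_pos
  obtain ⟨n, hn⟩ := exists_nat_gt (max 1 (1/(δ*Real.pi)))
  have hn1 : (1:ℝ) ≤ (n:ℝ) := le_of_lt (lt_of_le_of_lt (le_max_left _ _) hn)
  have hn0 : (0:ℝ) < (n:ℝ) := by linarith
  have hc : 1/((n:ℝ)*Real.pi) < δ := by
    have h2 : 1/(δ*Real.pi) < (n:ℝ) := lt_of_le_of_lt (le_max_right _ _) hn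
    rw [div_lt_iff₀ (by positivity)]
    rw [div_lt_iff₀ (by positivity)] at h2
    nlinarith
  -- evaluation lemmas
  have evN : ∀ m : ℕ, 0 < (m:ℝ) → f (1/((m:ℝ)*Real.pi)) = (1/((m:ℝ)*Real.pi))^3 := by
    intro m hm
    rw [hf _ (by positivity), one_div_one_div, Real.sin_nat_mul_pi]
    ring
  have evB : ∀ m : ℕ, f (2/((2*(m:ℝ)+1)*Real.pi)) =
      (2/((2*(m:ℝ)+1)*Real.pi))^3 + (2/((2*(m:ℝ)+1)*Real.pi))^2 := by
    intro m
    have hm1 : (0:ℝ) < 2*(m:ℝ)+1 := by positivity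
    rw [hf _ (by positivity)]
    have h1 : 1/(2/((2*(m:ℝ)+1)*Real.pi)) = (m:ℝ)*Real.pi + Real.pi/2 := by
      field_simp
    have h2 : Real.cos ((m:ℝ)*Real.pi)^2 = 1 := by
      have h3 := Real.sin_sq_add_cos_sq ((m:ℝ)*Real.pi)
      rw [Real.sin_nat_mul_pi] at h3
      nlinarith
    rw [h1, Real.sin_add, Real.sin_pi_div_two, Real.cos_pi_div_two]
    rw [Real.sin_nat_mul_pi]
    ring_nf
    nlinarith [h2]
  -- the points
  set A : ℝ := (n:ℝ) with hA
  have hA1 : 1 ≤ A := hn1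
  have hord1 := order_aux A hA1
  have hord2 := order_aux (A+1) (by linarith)
  have key1 := cube_lt_sq_aux A hA1
  have key2 := cube_lt_sq_aux (A+1) (by linarith)
  have hac : 1/((A+1)*Real.pi) ≤ 1/(A*Real.pi) := by
    rw [div_le_div_iff₀ (by positivity) (by positivity)]; nlinarith
  have hmem : ∀ x : ℝ, 0 < x → x ≤ 1/(A*Real.pi) → x ∈ Set.Ioo (0:ℝ) δ := by
    intro x hx hxc
    exact ⟨hx, lt_of_le_of_lt hxc hc⟩
  have hfa : f (1/((A+1)*Real.pi)) = (1/((A+1)*Real.pi))^3 := by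
    have := evN (n+1) (by push_cast; linarith)
    push_cast at this
    exact this
  have hfc : f (1/(A*Real.pi)) = (1/(A*Real.pi))^3 := evN n hn0
  have hfb : f (2/((2*A+1)*Real.pi)) =
      (2/((2*A+1)*Real.pi))^3 + (2/((2*A+1)*Real.pi))^2 := evB n
  have hfp : f (2/((2*(A+1)+1)*Real.pi)) =
      (2/((2*(A+1)+1)*Real.pi))^3 + (2/((2*(A+1)+1)*Real.pi))^2 := by
    have := evB (n+1)
    push_cast at this
    push_cast
    convert this using 3 <;> ring
  constructor
  · intro hconv
    -- f b ≤ max (f a) (f c)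
    have hmema : 1/((A+1)*Real.pi) ∈ Set.Ioo (0:ℝ) δ :=
      hmem _ (by positivity) hac
    have hmemc : 1/(A*Real.pi) ∈ Set.Ioo (0:ℝ) δ := hmem _ (by positivity) le_rfl
    have hseg : 2/((2*A+1)*Real.pi) ∈ segment ℝ (1/((A+1)*Real.pi)) (1/(A*Real.pi)) := by
      rw [segment_eq_Icc hac]
      exact ⟨hord1.1, hord1.2⟩
    have h := hconv.le_on_segment hmema hmemc hseg
    rw [hfa, hfc, hfb] at h
    have hmax : max ((1/((A+1)*Real.pi))^3) ((1/(A*Real.pi))^3) ≤ (1/(A*Real.pi))^3 := by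
      apply max_le _ le_rfl
      have h0 : (0:ℝ) < 1/((A+1)*Real.pi) := by positivity
      exact pow_le_pow_left₀ h0.le hac 3
    have hb3 : (0:ℝ) < (2/((2*A+1)*Real.pi))^3 := by positivity
    rcases le_or_gt ((1/((A+1)*Real.pi))^3) ((1/(A*Real.pi))^3) with _ | _
    · linarith [le_trans h hmax]
    · linarith [le_trans h hmax]
  · intro hconc
    have hmemp : 2/((2*(A+1)+1)*Real.pi) ∈ Set.Ioo (0:ℝ) δ := by
      apply hmem _ (by positivity)
      exact le_trans hord2.2 hac
    have hmemr : 2/((2*A+1)*Real.pi) ∈ Set.Ioo (0:ℝ) δ :=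
      hmem _ (by positivity) hord1.2
    have hpr : 2/((2*(A+1)+1)*Real.pi) ≤ 2/((2*A+1)*Real.pi) := by
      rw [div_le_div_iff₀ (by positivity) (by positivity)]; nlinarith
    have hseg : 1/((A+1)*Real.pi) ∈
        segment ℝ (2/((2*(A+1)+1)*Real.pi)) (2/((2*A+1)*Real.pi)) := by
      rw [segment_eq_Icc hpr]
      exact ⟨hord2.2, hord1.1⟩
    have h := hconc.ge_on_segment hmemp hmemr hseg
    rw [hfa, hfp, hfb] at h
    have hfr : f (2/((2*A+1)*Real.pi)) = (2/((2*A+1)*Real.pi))^3 + (2/((2*A+1)*Real.pi))^2 := hfb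
    -- min ≥ p^2
    have hp2 : (2/((2*(A+1)+1)*Real.pi))^2 ≤
        min ((2/((2*(A+1)+1)*Real.pi))^3 + (2/((2*(A+1)+1)*Real.pi))^2)
            ((2/((2*A+1)*Real.pi))^3 + (2/((2*A+1)*Real.pi))^2) :=
      min_aux (by positivity) hpr
    linarith [le_trans hp2 h, key2]
end

section
/- The function f(x) = ∫₀ˣ |cos(1/t)|^(1/|t|) dt (with integrand 0 at t = 0) is differentiable at 0 with f'(0) = 0, and its derivative f'(x) = |cos(1/x)|^(1/|x|) ≥ 0 for x ≠ 0 is not continuous at 0. -/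
/-!
For `x ≠ 0` the fundamental theorem of calculus gives `f' x = g x`, and `g (1 / (2πn)) = 1`,
so `f'` cannot be continuous at `0`. The point is `f'(0) = 0`, i.e. `∫₀ˣ g = o(x)`.
Fix `w > 0`. If `1 / t` is at distance at least `w` from every multiple of `π`, then
`g t ≤ (cos w) ^ (1 / x)` for `t ∈ (0, x]`, and this tends to `0` with `x`. The other
`t ∈ (0, x]` lie in the intervals `(1 / (kπ + w), 1 / (kπ - w))` with `k ≳ 1 / x`,
of total length `≲ ∑_{k ≳ 1/x} w / k² ≲ w x`.
-/

open Real MeasureTheory Set Filter Topology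

noncomputable def cosInvPow (t : ℝ) : ℝ := if t = 0 then 0 else |cos (1 / t)| ^ (1 / |t|)

lemma cosInvPow_zero : cosInvPow 0 = 0 := if_pos rfl

lemma cosInvPow_of_pos {t : ℝ} (ht : 0 < t) : cosInvPow t = |cos (1 / t)| ^ (1 / t) := by
  rw [cosInvPow, if_neg ht.ne', abs_of_pos ht]

lemma cosInvPow_nonneg (t : ℝ) : 0 ≤ cosInvPow t := by
  unfold cosInvPow; split
  exacts [le_rfl, rpow_nonneg (abs_nonneg _) _]

lemma cosInvPow_le_one (t : ℝ) : cosInvPow t ≤ 1 := by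
  unfold cosInvPow; split
  exacts [zero_le_one, rpow_le_one (abs_nonneg _) (abs_cos_le_one _) (by positivity)]

lemma cosInvPow_neg (t : ℝ) : cosInvPow (-t) = cosInvPow t := by
  simp only [cosInvPow, neg_eq_zero, abs_neg, one_div, inv_neg, cos_neg]

lemma measurable_cosInvPow : Measurable cosInvPow :=
  Measurable.ite (measurableSet_singleton 0) measurable_const (by fun_prop)

lemma intervalIntegrable_cosInvPow (a b : ℝ) : IntervalIntegrable cosInvPow volume a b := by
  refine IntervalIntegrable.mono_fun' (g := fun _ => (1 : ℝ)) intervalIntegrable_const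
    measurable_cosInvPow.aestronglyMeasurable (ae_of_all _ fun t => ?_)
  simpa only [norm_of_nonneg (cosInvPow_nonneg t)] using cosInvPow_le_one t

lemma continuousAt_cosInvPow {x : ℝ} (hx : x ≠ 0) : ContinuousAt cosInvPow x := by
  have hpow : ContinuousAt (fun t : ℝ => |cos (1 / t)| ^ (1 / |t|)) x :=
    ((continuous_cos.continuousAt.comp (continuousAt_const.div continuousAt_id hx)).abs).rpow
      (continuousAt_const.div continuous_abs.continuousAt (abs_ne_zero.mpr hx))
      (Or.inr (by positivity))
  exact hpow.congr <| (eventually_ne_nhds hx).mono fun t ht => (if_neg ht).symm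

lemma cosInvPow_inv_two_pi_mul_succ (n : ℕ) : cosInvPow (2 * π * (n + 1))⁻¹ = 1 := by
  rw [cosInvPow_of_pos (by positivity), one_div, inv_inv,
    show 2 * π * (n + 1) = ((n + 1 : ℕ) : ℝ) * (2 * π) by push_cast; ring,
    cos_nat_mul_two_pi, abs_one, one_rpow]

lemma not_continuousAt_cosInvPow_zero : ¬ ContinuousAt cosInvPow 0 := by
  intro hcont
  have hseq : Tendsto (fun n : ℕ => (2 * π * (n + 1))⁻¹) atTop (𝓝 0) :=
    tendsto_inv_atTop_zero.comp <| (tendsto_natCast_atTop_atTop.atTop_add tendsto_const_nhds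
      |>.const_mul_atTop (by positivity))
  have h := hcont.tendsto.comp hseq
  simp only [Function.comp_def, cosInvPow_inv_two_pi_mul_succ, cosInvPow_zero] at h
  exact one_ne_zero (tendsto_nhds_unique tendsto_const_nhds h)

lemma cos_pos_of_nonneg_of_le_one {w : ℝ} (hw0 : 0 ≤ w) (hw1 : w ≤ 1) : 0 < cos w :=
  cos_pos_of_mem_Ioo ⟨by linarith [pi_pos], by linarith [pi_gt_three]⟩

lemma abs_cos_le_cos_of_forall_le_abs_sub {u w : ℝ} (hw : 0 ≤ w)
    (h : ∀ k : ℤ, w ≤ |u - k * π|) : |cos u| ≤ cos w := by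
  set k := round (u / π)
  have hd : |u - k * π| ≤ π / 2 := by
    have := abs_sub_round (u / π)
    rw [show u - k * π = (u / π - k) * π by field_simp, abs_mul, abs_of_pos pi_pos]
    nlinarith [pi_pos]
  have hcos : |cos u| = cos |u - k * π| := calc
    |cos u| = |cos (u - k * π)| := by rw [cos_sub_int_mul_pi, abs_mul, abs_neg_one_zpow, one_mul]
    _ = cos (u - k * π) := abs_of_nonneg (cos_nonneg_of_mem_Icc (abs_le.1 hd))
    _ = cos |u - k * π| := (cos_abs _).symm
  rw [hcos]
  exact cos_le_cos_of_nonneg_of_le_pi hw (hd.trans (by linarith [pi_pos])) (h k)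

lemma one_div_sub_one_div_le_inv_sq {m w : ℝ} (hm : 1 ≤ m) (hw0 : 0 ≤ w) (hw1 : w ≤ 1) :
    1 / (m * π - w) - 1 / (m * π + w) ≤ w * (m ^ 2)⁻¹ := by
  have hπ : 3 < π := pi_gt_three
  have hlo : 0 < m * π - w := by nlinarith
  rw [div_sub_div _ _ hlo.ne' (by nlinarith), ← div_eq_mul_inv,
    div_le_div_iff₀ (mul_pos hlo (by nlinarith)) (by positivity)]
  have hgap : 2 * m ^ 2 ≤ (m * π) ^ 2 - w ^ 2 := by
    have hπ2 : 9 ≤ π ^ 2 := by nlinarith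
    nlinarith [mul_le_mul_of_nonneg_left hπ2 (sq_nonneg m), mul_le_mul hw1 hw1 hw0 zero_le_one,
      mul_le_mul hm hm zero_le_one (by linarith)]
  nlinarith [mul_le_mul_of_nonneg_left hgap hw0]

lemma sum_range_inv_sq_add_le (K n : ℕ) :
    ∑ j ∈ Finset.range n, (((K + 1 + j : ℕ) : ℝ) ^ 2)⁻¹ ≤ 2 / (K + 1) := by
  have h := sum_Ioo_inv_sq_le (α := ℝ) K (K + 1 + n)
  have hIoo : Finset.Ioo K (K + 1 + n) = Finset.Ico (K + 1) (K + 1 + n) := by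
    ext; simp only [Finset.mem_Ioo, Finset.mem_Ico]; omega
  rwa [hIoo, Finset.sum_Ico_eq_sum_range, Nat.add_sub_cancel_left] at h

-- Neighbourhoods of the points `1 / (kπ)`, `k > K`, where `|cos (1 / t)| = 1`.
def peakSet (K : ℕ) (w : ℝ) : Set ℝ :=
  ⋃ j : ℕ, Ioo (1 / ((K + 1 + j : ℕ) * π + w)) (1 / ((K + 1 + j : ℕ) * π - w))

lemma volume_peakSet_le (K : ℕ) {w : ℝ} (hw0 : 0 ≤ w) (hw1 : w ≤ 1) :
    volume (peakSet K w) ≤ ENNReal.ofReal (2 * w / (K + 1)) := by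
  refine (measure_iUnion_le _).trans (ENNReal.tsum_le_of_sum_range_le fun n => ?_)
  simp only [Real.volume_Ioo]
  rw [← ENNReal.ofReal_sum_of_nonneg fun j _ => ?_]
  · refine ENNReal.ofReal_le_ofReal ?_
    calc _ ≤ ∑ j ∈ Finset.range n, w * (((K + 1 + j : ℕ) : ℝ) ^ 2)⁻¹ :=
          Finset.sum_le_sum fun j _ =>
            one_div_sub_one_div_le_inv_sq (by norm_cast; omega) hw0 hw1
      _ ≤ w * (2 / (K + 1)) := by
          rw [← Finset.mul_sum]; exact mul_le_mul_of_nonneg_left (sum_range_inv_sq_add_le K n) hw0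
      _ = 2 * w / (K + 1) := by ring
  · have hm : (1 : ℝ) ≤ (K + 1 + j : ℕ) := by norm_cast; omega
    exact sub_nonneg.2 (one_div_le_one_div_of_le (by nlinarith [pi_gt_three]) (by linarith))

lemma mem_peakSet_of_abs_inv_sub_lt {K : ℕ} {x w t : ℝ} (ht : t ∈ Ioc 0 x)
    (hx : x ≤ 1 / 2) (hw1 : w ≤ 1) (hK : (K : ℝ) ≤ 1 / (2 * π * x)) {k : ℤ}
    (hk : |1 / t - k * π| < w) :
    t ∈ peakSet K w := by
  obtain ⟨ht0, htx⟩ := ht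
  have hx0 : 0 < x := ht0.trans_le htx
  obtain ⟨hk₁, hk₂⟩ := abs_sub_lt_iff.1 hk
  have hw0 : 0 ≤ w := (abs_nonneg _).trans hk.le
  have hkπ : 1 / (2 * x) < k * π := by
    have h1 : 1 / x ≤ 1 / t := one_div_le_one_div_of_le ht0 htx
    have h2 : 1 / (2 * x) * 2 = 1 / x := by field_simp
    have h3 : 1 ≤ 1 / (2 * x) := by rw [le_div_iff₀ (by linarith)]; linarith
    linarith
  have hKk : (K : ℤ) < k := by
    have h1 : 1 < k * (2 * π * x) := by
      have := (div_lt_iff₀ (by positivity)).1 hkπ; linarith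
    rw [le_div_iff₀ (by positivity)] at hK
    have h2 : (K : ℝ) * (2 * π * x) < k * (2 * π * x) := by linarith
    exact_mod_cast lt_of_mul_lt_mul_right h2 (by positivity)
  obtain ⟨j, hj⟩ := Int.eq_ofNat_of_zero_le (by omega : (0 : ℤ) ≤ k - (K + 1))
  have hkj : ((K + 1 + j : ℕ) : ℝ) = k := by
    rw [show k = K + 1 + j by omega]; push_cast; ring
  have hlo : 0 < k * π - w := by
    have : 1 ≤ 1 / (2 * x) := by rw [le_div_iff₀ (by linarith)]; linarith
    linarith
  refine mem_iUnion.2 ⟨j, ?_, ?_⟩ <;> rw [hkj]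
  · exact (one_div_lt (by linarith) ht0).2 (by linarith)
  · exact (lt_one_div ht0 hlo).2 (by linarith)

lemma cosInvPow_le_of_forall_le_abs_sub {x w t : ℝ} (ht : t ∈ Ioc 0 x) (hw0 : 0 ≤ w)
    (hw1 : w ≤ 1) (h : ∀ k : ℤ, w ≤ |1 / t - k * π|) :
    cosInvPow t ≤ cos w ^ (1 / x) := by
  obtain ⟨ht0, htx⟩ := ht
  have hcos := cos_pos_of_nonneg_of_le_one hw0 hw1
  rw [cosInvPow_of_pos ht0]
  calc |cos (1 / t)| ^ (1 / t) ≤ cos w ^ (1 / t) :=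
        rpow_le_rpow (abs_nonneg _) (abs_cos_le_cos_of_forall_le_abs_sub hw0 h) (by positivity)
    _ ≤ cos w ^ (1 / x) :=
        rpow_le_rpow_of_exponent_ge hcos (cos_le_one w) (one_div_le_one_div_of_le ht0 htx)

lemma integral_cosInvPow_le {x w : ℝ} (hx0 : 0 < x) (hx : x ≤ 1 / 2) (hw0 : 0 ≤ w)
    (hw1 : w ≤ 1) : ∫ t in (0)..x, cosInvPow t ≤ cos w ^ (1 / x) * x + 4 * π * w * x := by
  set K := ⌊1 / (2 * π * x)⌋₊
  set T := peakSet K w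
  have hT : MeasurableSet T := MeasurableSet.iUnion fun _ => measurableSet_Ioo
  have hle : ∀ t ∈ Ioc 0 x, cosInvPow t ≤ cos w ^ (1 / x) + T.indicator 1 t := by
    intro t ht
    by_cases htT : t ∈ T
    · rw [indicator_of_mem htT, Pi.one_apply]
      linarith [cosInvPow_le_one t, rpow_nonneg (cos_pos_of_nonneg_of_le_one hw0 hw1).le (1 / x)]
    · rw [indicator_of_notMem htT, add_zero]
      refine cosInvPow_le_of_forall_le_abs_sub ht hw0 hw1 fun k => ?_
      by_contra! hk
      exact htT (mem_peakSet_of_abs_inv_sub_lt ht hx hw1 (Nat.floor_le (by positivity)) hk)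
  have hvol : volume.real (T ∩ Ioc 0 x) ≤ 4 * π * w * x := by
    have hK : 1 ≤ 2 * π * x * (K + 1) := by
      have := Nat.lt_floor_add_one (1 / (2 * π * x))
      rw [div_lt_iff₀ (by positivity)] at this
      linarith
    have h2w : 2 * w / (K + 1) ≤ 4 * π * w * x := by
      rw [div_le_iff₀ (by positivity)]
      nlinarith [mul_le_mul_of_nonneg_left hK hw0]
    exact ENNReal.toReal_le_of_le_ofReal (by positivity) ((measure_mono inter_subset_left).trans
      ((volume_peakSet_le K hw0 hw1).trans (ENNReal.ofReal_le_ofReal h2w)))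
  have hconst : IntegrableOn (fun _ => cos w ^ (1 / x)) (Ioc 0 x) :=
    integrableOn_const measure_Ioc_lt_top.ne
  have hind : IntegrableOn (T.indicator 1) (Ioc 0 x) :=
    (integrableOn_const (C := (1 : ℝ)) measure_Ioc_lt_top.ne).indicator hT
  rw [intervalIntegral.integral_of_le hx0.le]
  calc ∫ t in Ioc 0 x, cosInvPow t
      ≤ ∫ t in Ioc 0 x, (cos w ^ (1 / x) + T.indicator 1 t) :=
        setIntegral_mono_on (intervalIntegrable_cosInvPow 0 x).1 (hconst.add hind)
          measurableSet_Ioc hle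
    _ = cos w ^ (1 / x) * x + volume.real (T ∩ Ioc 0 x) := by
        rw [integral_add hconst hind, integral_const, integral_indicator_one hT,
          measureReal_restrict_apply_univ, Real.volume_real_Ioc_of_le hx0.le,
          measureReal_restrict_apply hT, smul_eq_mul, sub_zero, mul_comm]
    _ ≤ cos w ^ (1 / x) * x + 4 * π * w * x := by linarith

lemma tendsto_rpow_one_div_nhdsGT_zero {a : ℝ} (ha₀ : 0 ≤ a) (ha₁ : a < 1) :
    Tendsto (fun x : ℝ => a ^ (1 / x)) (𝓝[>] 0) (𝓝 0) := by
  simpa only [one_div, Function.comp_def] using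
    (tendsto_rpow_atTop_of_base_lt_one a (by linarith) ha₁).comp tendsto_inv_nhdsGT_zero

lemma eventually_integral_cosInvPow_le {c : ℝ} (hc : 0 < c) :
    ∀ᶠ x in 𝓝[>] 0, ∫ t in (0)..x, cosInvPow t ≤ c * x := by
  set w := min 1 (c / (8 * π))
  have hw0 : 0 < w := lt_min one_pos (by positivity)
  have hw1 : w ≤ 1 := min_le_left _ _
  have hwc : 4 * π * w ≤ c / 2 := by
    have := min_le_right 1 (c / (8 * π))
    rw [le_div_iff₀ (by positivity)] at this
    linarith
  have hcos₀ := cos_pos_of_nonneg_of_le_one hw0.le hw1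
  have hcos₁ : cos w < 1 := by
    simpa only [cos_zero] using cos_lt_cos_of_nonneg_of_le_pi le_rfl (by linarith [pi_gt_three]) hw0
  filter_upwards [self_mem_nhdsWithin,
    nhdsWithin_le_nhds (Iic_mem_nhds (by norm_num : (0 : ℝ) < 1 / 2)),
    (tendsto_rpow_one_div_nhdsGT_zero hcos₀.le hcos₁).eventually (Iic_mem_nhds (half_pos hc))]
    with x (hx0 : 0 < x) (hx : x ≤ 1 / 2) (hpow : cos w ^ (1 / x) ≤ c / 2)
  calc ∫ t in (0)..x, cosInvPow t ≤ cos w ^ (1 / x) * x + 4 * π * w * x :=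
        integral_cosInvPow_le hx0 hx hw0.le hw1
    _ ≤ c / 2 * x + c / 2 * x := by gcongr
    _ = c * x := by ring

lemma integral_cosInvPow_neg (x : ℝ) :
    ∫ t in (0)..(-x), cosInvPow t = -∫ t in (0)..x, cosInvPow t := by
  rw [intervalIntegral.integral_symm, neg_inj]
  simpa only [cosInvPow_neg, neg_zero] using
    (intervalIntegral.integral_comp_neg (a := 0) (b := x) cosInvPow).symm

lemma abs_integral_cosInvPow (x : ℝ) :
    |∫ t in (0)..x, cosInvPow t| = ∫ t in (0)..|x|, cosInvPow t := by
  have hnonneg {y : ℝ} (hy : 0 ≤ y) : 0 ≤ ∫ t in (0)..y, cosInvPow t :=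
    intervalIntegral.integral_nonneg hy fun t _ => cosInvPow_nonneg t
  rcases le_or_gt 0 x with hx | hx
  · rw [abs_of_nonneg hx, abs_of_nonneg (hnonneg hx)]
  · rw [abs_of_neg hx, ← neg_neg (∫ t in (0)..x, cosInvPow t), ← integral_cosInvPow_neg,
      abs_neg, abs_of_nonneg (hnonneg (by linarith))]

lemma integral_cosInvPow_isLittleO :
    (fun x => ∫ t in (0)..x, cosInvPow t) =o[𝓝 0] fun x => x := by
  refine Asymptotics.IsLittleO.of_bound fun c hc => ?_
  obtain ⟨u, hu0, hu⟩ :=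
    mem_nhdsGT_iff_exists_Ioo_subset.1 (eventually_integral_cosInvPow_le hc)
  filter_upwards [Ioo_mem_nhds (neg_lt_zero.2 hu0) hu0] with x hx
  rw [norm_eq_abs, norm_eq_abs, abs_integral_cosInvPow]
  rcases eq_or_ne x 0 with rfl | hx0
  · simp
  · exact hu ⟨abs_pos.2 hx0, abs_lt.2 hx⟩

lemma hasDerivAt_integral_cosInvPow (x : ℝ) :
    HasDerivAt (fun x => ∫ t in (0)..x, cosInvPow t) (cosInvPow x) x := by
  rcases eq_or_ne x 0 with rfl | hx
  · rw [hasDerivAt_iff_isLittleO, cosInvPow_zero]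
    simpa using integral_cosInvPow_isLittleO
  · exact intervalIntegral.integral_hasDerivAt_right (intervalIntegrable_cosInvPow 0 x)
      measurable_cosInvPow.stronglyMeasurable.stronglyMeasurableAtFilter (continuousAt_cosInvPow hx)

theorem stmt_16 (g f : ℝ → ℝ)
    (hg : ∀ t : ℝ, g t = if t = 0 then 0 else |Real.cos (1 / t)| ^ (1 / |t|))
    (hf : ∀ x : ℝ, f x = ∫ t in (0 : ℝ)..x, g t) :
    HasDerivAt f 0 0 ∧ (∀ x : ℝ, 0 ≤ deriv f x) ∧ ¬ ContinuousAt (deriv f) 0 := by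
  obtain rfl : g = cosInvPow := funext hg
  obtain rfl : f = fun x => ∫ t in (0)..x, cosInvPow t := funext hf
  have hderiv : deriv (fun x => ∫ t in (0)..x, cosInvPow t) = cosInvPow :=
    funext fun x => (hasDerivAt_integral_cosInvPow x).deriv
  have hzero := hasDerivAt_integral_cosInvPow 0
  rw [cosInvPow_zero] at hzero
  refine ⟨hzero, ?_, ?_⟩ <;> rw [hderiv]
  exacts [cosInvPow_nonneg, not_continuousAt_cosInvPow_zero]
end
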